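/- arXiv:2105.13513 — 3 statements merged into one kernel-verified Lean document; each statement's English description precedes it below -/
import Mathlib

section
/- Let L be a positive integer and let p_1, ..., p_k (with k ≥ 2) be distinct odd primes, each dividing the Fibonacci number F_L, such that for each i, p_i ≡ 1 (mod L) or p_i ≡ -1 (mod L). Then the product P = p_1 · p_2 · ... · p_k satisfies P ≡ (5/P) (mod L), where (5/P) denotes the Jacobi symbol; equivalently, L divides P - (5/P). -/
/-!
Let `q` be an odd prime and `φ, ψ` the roots of `X² = X + 1` in a field of characteristic `q`.
Then `(φ - ψ)² = 5`, so Euler's criterion gives `(φ - ψ)^q = (5/q) (φ - ψ)`, and with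
Frobenius `φ^q = φ` if `(5/q) = 1` and `φ^q = ψ` if `(5/q) = -1`. In both cases
`φ^m = ψ^m` for `m = q - (5/q)`, and Binet's formula `(φ - ψ) F_m = φ^m - ψ^m`
gives `q ∣ F_m`.

If `q ∣ F_L` and `q ≡ -(5/q) (mod L)`, then `q ∣ F_{gcd(L, m)}` with `gcd(L, m) ∣ 2`,
impossible since `F_1 = F_2 = 1`; hence `q ≡ (5/q) (mod L)`. The same argument with `m = 5`
excludes `q = 5`, and the congruence passes to `P` because the Jacobi symbol is multiplicative
in `P`.
-/

theorem sub_mul_fib_eq_pow_sub_pow {R : Type*} [CommRing R] {φ ψ : R} (hsum : φ + ψ = 1)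
    (hprod : φ * ψ = -1) (n : ℕ) : (φ - ψ) * Nat.fib n = φ ^ n - ψ ^ n := by
  induction n using Nat.twoStepInduction with
  | zero => simp
  | one => simp
  | more n ih₀ ih₁ =>
    rw [Nat.fib_add_two, Nat.cast_add]
    linear_combination ih₀ + ih₁ - (φ ^ (n + 1) - ψ ^ (n + 1)) * hsum
      + (φ ^ n - ψ ^ n) * hprod

theorem sub_sq_eq_five {R : Type*} [CommRing R] {φ ψ : R} (hsum : φ + ψ = 1)
    (hprod : φ * ψ = -1) : (φ - ψ) ^ 2 = 5 := by
  linear_combination (φ + ψ + 1) * hsum - 4 * hprod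

theorem pow_char_eq_legendreSym_mul {R : Type*} [CommRing R] (q : ℕ) [Fact q.Prime] [CharP R q]
    (hq : q ≠ 2) {a : ℤ} {s : R} (hs : s ^ 2 = a) : s ^ q = legendreSym q a * s := by
  have euler : ((legendreSym q a : ℤ) : R) = (a : R) ^ (q / 2) := by
    simpa using congrArg (ZMod.castHom (dvd_refl q) R) (legendreSym.eq_pow q a)
  rw [euler, ← hs, ← pow_mul, ← pow_succ, two_mul]
  congr 1
  have := Nat.odd_iff.mp ((Fact.out : q.Prime).odd_of_ne_two hq)
  omega

theorem two_mul_pow_char_eq {R : Type*} [CommRing R] (q : ℕ) [Fact q.Prime] [CharP R q]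
    (hq : q ≠ 2) {φ ψ : R} (hsum : φ + ψ = 1) (hprod : φ * ψ = -1) :
    2 * φ ^ q = 1 + legendreSym q 5 * (φ - ψ) := by
  have hsum_q : φ ^ q + ψ ^ q = 1 := by rw [← add_pow_char, hsum, one_pow]
  have hdiff : φ ^ q - ψ ^ q = legendreSym q 5 * (φ - ψ) := by
    rw [← sub_pow_char]
    exact pow_char_eq_legendreSym_mul q hq (by push_cast; exact sub_sq_eq_five hsum hprod)
  linear_combination hsum_q + hdiff

theorem exists_add_eq_one_mul_eq_neg_one (K : Type*) [Field K] [IsAlgClosed K] :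
    ∃ φ ψ : K, φ + ψ = 1 ∧ φ * ψ = -1 := by
  open Polynomial in
  have hdeg : (X ^ 2 - X - 1 : K[X]).degree = 2 := by compute_degree!
  obtain ⟨φ, hφ⟩ := IsAlgClosed.exists_root _ (hdeg ▸ two_ne_zero)
  refine ⟨φ, 1 - φ, by ring, ?_⟩
  simp only [IsRoot, eval_sub, eval_pow, eval_X, eval_one] at hφ
  linear_combination -hφ

theorem intCast_ne_zero_of_legendreSym_ne_zero {K : Type*} [Field K] (q : ℕ) [Fact q.Prime]
    [CharP K q] {a : ℤ} (h : legendreSym q a ≠ 0) : (a : K) ≠ 0 := by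
  rw [Ne, legendreSym.eq_zero_iff] at h
  simpa using (map_ne_zero (ZMod.castHom (dvd_refl q) K)).mpr h

theorem dvd_fib_of_pow_eq_pow {K : Type*} [Field K] (q : ℕ) [CharP K q] {φ ψ : K}
    (h5 : (5 : K) ≠ 0) (hsum : φ + ψ = 1) (hprod : φ * ψ = -1) {n : ℕ}
    (hn : φ ^ n = ψ ^ n) : q ∣ Nat.fib n := by
  have hne : φ - ψ ≠ 0 := fun h ↦ h5 (by rw [← sub_sq_eq_five hsum hprod, h, sq, zero_mul])
  have hbinet := sub_mul_fib_eq_pow_sub_pow hsum hprod n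
  rw [hn, sub_self] at hbinet
  exact (CharP.cast_eq_zero_iff K q _).mp ((mul_eq_zero.mp hbinet).resolve_left hne)

section FibRoots

variable {K : Type*} [Field K] (q : ℕ) [Fact q.Prime] [CharP K q] {φ ψ : K}

theorem pow_char_eq_self_of_legendreSym_eq_one (hq : q ≠ 2) (hsum : φ + ψ = 1)
    (hprod : φ * ψ = -1) (h : legendreSym q 5 = 1) : φ ^ q = φ := by
  have h2 : (2 : K) ≠ 0 := Ring.two_ne_zero (by rwa [ringChar.eq K q])
  refine mul_left_cancel₀ h2 ?_
  rw [two_mul_pow_char_eq q hq hsum hprod, h]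
  linear_combination -hsum

theorem pow_char_eq_of_legendreSym_eq_neg_one (hq : q ≠ 2) (hsum : φ + ψ = 1)
    (hprod : φ * ψ = -1) (h : legendreSym q 5 = -1) : φ ^ q = ψ := by
  have h2 : (2 : K) ≠ 0 := Ring.two_ne_zero (by rwa [ringChar.eq K q])
  refine mul_left_cancel₀ h2 ?_
  rw [two_mul_pow_char_eq q hq hsum hprod, h]
  push_cast
  linear_combination -hsum

end FibRoots

theorem dvd_fib_sub_one_of_legendreSym_eq_one (q : ℕ) [Fact q.Prime] (hq : q ≠ 2)
    (h : legendreSym q 5 = 1) : q ∣ Nat.fib (q - 1) := by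
  obtain ⟨φ, ψ, hsum, hprod⟩ := exists_add_eq_one_mul_eq_neg_one (AlgebraicClosure (ZMod q))
  have h5 := intCast_ne_zero_of_legendreSym_ne_zero (K := AlgebraicClosure (ZMod q)) q
    (a := 5) (by rw [h]; exact one_ne_zero)
  refine dvd_fib_of_pow_eq_pow q (by exact_mod_cast h5) hsum hprod ?_
  have hφ := pow_char_eq_self_of_legendreSym_eq_one q hq hsum hprod h
  have hψ := pow_char_eq_self_of_legendreSym_eq_one q hq (add_comm φ ψ ▸ hsum)
    (mul_comm φ ψ ▸ hprod) h
  have hφ0 : φ ≠ 0 := left_ne_zero_of_mul (hprod ▸ neg_ne_zero.mpr one_ne_zero)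
  have hψ0 : ψ ≠ 0 := right_ne_zero_of_mul (hprod ▸ neg_ne_zero.mpr one_ne_zero)
  have hq0 : q ≠ 0 := (Fact.out : q.Prime).ne_zero
  have hφ1 : φ ^ (q - 1) = 1 := (mul_eq_right₀ hφ0).mp (by rw [pow_sub_one_mul hq0, hφ])
  have hψ1 : ψ ^ (q - 1) = 1 := (mul_eq_right₀ hψ0).mp (by rw [pow_sub_one_mul hq0, hψ])
  rw [hφ1, hψ1]

theorem dvd_fib_add_one_of_legendreSym_eq_neg_one (q : ℕ) [Fact q.Prime] (hq : q ≠ 2)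
    (h : legendreSym q 5 = -1) : q ∣ Nat.fib (q + 1) := by
  obtain ⟨φ, ψ, hsum, hprod⟩ := exists_add_eq_one_mul_eq_neg_one (AlgebraicClosure (ZMod q))
  have h5 := intCast_ne_zero_of_legendreSym_ne_zero (K := AlgebraicClosure (ZMod q)) q
    (a := 5) (by rw [h]; exact neg_ne_zero.mpr one_ne_zero)
  refine dvd_fib_of_pow_eq_pow q (by exact_mod_cast h5) hsum hprod ?_
  have hφ := pow_char_eq_of_legendreSym_eq_neg_one q hq hsum hprod h
  have hψ := pow_char_eq_of_legendreSym_eq_neg_one q hq (add_comm φ ψ ▸ hsum)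
    (mul_comm φ ψ ▸ hprod) h
  rw [pow_succ, pow_succ, hφ, hψ, mul_comm]

theorem Nat.Prime.not_gcd_dvd_two_of_dvd_fib {q m n : ℕ} (hq : q.Prime) (hm : q ∣ Nat.fib m)
    (hn : q ∣ Nat.fib n) : ¬ Nat.gcd m n ∣ 2 := by
  intro h
  have hgcd : q ∣ Nat.fib (Nat.gcd m n) := Nat.fib_gcd m n ▸ Nat.dvd_gcd hm hn
  rcases (Nat.dvd_prime Nat.prime_two).mp h with h | h <;> rw [h] at hgcd <;>
    exact hq.not_dvd_one hgcd

theorem Nat.gcd_dvd_natAbs_of_modEq {L a : ℕ} {c : ℤ} (h : (a : ℤ) ≡ c [ZMOD L]) :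
    Nat.gcd L a ∣ c.natAbs := by
  rw [← Int.natCast_dvd]
  have hL : (Nat.gcd L a : ℤ) ∣ c - a :=
    (Int.natCast_dvd_natCast.mpr (Nat.gcd_dvd_left L a)).trans h.dvd
  have ha : (Nat.gcd L a : ℤ) ∣ a := Int.natCast_dvd_natCast.mpr (Nat.gcd_dvd_right L a)
  simpa using dvd_add hL ha

theorem modEq_jacobiSym_five_of_dvd_fib {L q : ℕ} (hq : q.Prime) (hq2 : q ≠ 2)
    (hdvd : q ∣ Nat.fib L) (hcong : (q : ℤ) ≡ 1 [ZMOD L] ∨ (q : ℤ) ≡ -1 [ZMOD L]) :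
    (q : ℤ) ≡ jacobiSym 5 q [ZMOD L] := by
  have := Fact.mk hq
  have hq5 : q ≠ 5 := by
    rintro rfl
    refine hq.not_gcd_dvd_two_of_dvd_fib hdvd (dvd_refl (Nat.fib 5)) ?_
    rcases hcong with h | h <;> exact (Nat.gcd_dvd_natAbs_of_modEq h).trans (by norm_num)
  have hcop : Int.gcd 5 q = 1 := Nat.Coprime.gcd_eq_one <|
    (Nat.coprime_primes Nat.prime_five hq).mpr hq5.symm
  have hJ := jacobiSym.eq_one_or_neg_one hcop
  rw [← jacobiSym.legendreSym.to_jacobiSym] at hJ ⊢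
  rcases hJ with h | h <;> rw [h] <;> rcases hcong with hc | hc
  · exact hc
  · have hmod : ((q - 1 : ℕ) : ℤ) ≡ -2 [ZMOD L] := by
      rw [Nat.cast_sub hq.one_le]
      exact hc.sub_right 1
    exact absurd ((Nat.gcd_dvd_natAbs_of_modEq hmod).trans (by norm_num))
      (hq.not_gcd_dvd_two_of_dvd_fib hdvd (dvd_fib_sub_one_of_legendreSym_eq_one q hq2 h))
  · have hmod : ((q + 1 : ℕ) : ℤ) ≡ 2 [ZMOD L] := by
      push_cast
      exact hc.add_right 1
    exact absurd ((Nat.gcd_dvd_natAbs_of_modEq hmod).trans (by norm_num))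
      (hq.not_gcd_dvd_two_of_dvd_fib hdvd (dvd_fib_add_one_of_legendreSym_eq_neg_one q hq2 h))
  · exact hc

theorem jacobiSym.prod_right {ι : Type*} (a : ℤ) (s : Finset ι) (f : ι → ℕ)
    (hf : ∀ i ∈ s, f i ≠ 0) :
    jacobiSym a (∏ i ∈ s, f i) = ∏ i ∈ s, jacobiSym a (f i) := by
  rw [← Finset.prod_map_toList, jacobiSym.list_prod_right (by simpa using hf), List.map_map,
    Finset.prod_map_toList]
  rfl

theorem product_of_special_fib_factors_congruent_jacobi_general
    (L k : ℕ) (p : Fin k → ℕ)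
    (hprime : ∀ i, (p i).Prime) (hodd : ∀ i, Odd (p i))
    (hdvd : ∀ i, p i ∣ Nat.fib L)
    (hcong : ∀ i, (p i : ℤ) ≡ 1 [ZMOD (L : ℤ)] ∨ (p i : ℤ) ≡ -1 [ZMOD (L : ℤ)]) :
    ((∏ i, p i : ℕ) : ℤ) ≡ jacobiSym 5 (∏ i, p i) [ZMOD (L : ℤ)] := by
  rw [jacobiSym.prod_right 5 _ p fun i _ ↦ (hprime i).ne_zero, Nat.cast_prod]
  exact Int.ModEq.prod fun i _ ↦ modEq_jacobiSym_five_of_dvd_fib (hprime i)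
    ((hodd i).ne_two_of_dvd_nat dvd_rfl) (hdvd i) (hcong i)

/-- Let `L` be a positive integer and `p 0, …, p (k-1)` (with `k ≥ 2`) distinct odd
primes, each dividing the Fibonacci number `F L`, such that each `p i ≡ ±1 (mod L)`.
Then `P = ∏ i, p i` satisfies `P ≡ (5/P) (mod L)`, where `(5/P)` is the Jacobi symbol. -/
theorem product_of_special_fib_factors_congruent_jacobi
    (L k : ℕ) (hL : 0 < L) (hk : 2 ≤ k) (p : Fin k → ℕ)
    (hinj : Function.Injective p)
    (hprime : ∀ i, (p i).Prime) (hodd : ∀ i, Odd (p i))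
    (hdvd : ∀ i, p i ∣ Nat.fib L)
    (hcong : ∀ i, (p i : ℤ) ≡ 1 [ZMOD (L : ℤ)] ∨ (p i : ℤ) ≡ -1 [ZMOD (L : ℤ)]) :
    ((∏ i, p i : ℕ) : ℤ) ≡ jacobiSym 5 (∏ i, p i) [ZMOD (L : ℤ)] :=
  product_of_special_fib_factors_congruent_jacobi_general L k p hprime hodd hdvd hcong
end

section
/- For every odd prime p, p divides the Fibonacci number F_{p - (5/p)}, where (5/p) denotes the Legendre symbol of 5 modulo p (so the index is p - 1 if p ≡ ±1 (mod 5), p + 1 if p ≡ ±2 (mod 5), and p if p = 5). -/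
/-!
Let `r` be a square root of `5` in a ring of characteristic `p`, e.g. an algebraic closure of
`𝔽_p`. The Binet formula gives `2ⁿ r Fₙ = (1 + r)ⁿ - (1 - r)ⁿ`, and Euler's criterion gives the
Frobenius action `r ^ p = (5/p) r`. If `(5/p) = 1`, Frobenius fixes `1 ± r`, so
`(1 ± r) ^ (p - 1) = 1`; if `(5/p) = -1`, it swaps them, so `(1 + r) ^ (p + 1)` and
`(1 - r) ^ (p + 1)` both equal `(1 + r)(1 - r) = -4`. Either way `2ⁿ r Fₙ = 0`, and since `2`
and `r` are units, `p ∣ Fₙ`.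
-/

theorem two_pow_mul_mul_fib_eq {R : Type*} [CommRing R] {r : R} (hr : r ^ 2 = 5) (n : ℕ) :
    2 ^ n * r * (Nat.fib n : R) = (1 + r) ^ n - (1 - r) ^ n := by
  induction n using Nat.twoStepInduction with
  | zero => simp
  | one => rw [Nat.fib_one, Nat.cast_one]; ring
  | more n ih₀ ih₁ =>
    rw [Nat.fib_add_two]
    push_cast
    linear_combination 2 * ih₁ + 4 * ih₀ - ((1 + r) ^ n - (1 - r) ^ n) * hr

theorem pow_char_eq_legendreSym_mul_s9 {R : Type*} [CommRing R] {p : ℕ} [Fact p.Prime] [CharP R p]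
    (hp : Odd p) {a : ℤ} {r : R} (hr : r ^ 2 = a) : r ^ p = legendreSym p a * r := by
  have euler := congrArg (ZMod.castHom (dvd_refl p) R) (legendreSym.eq_pow p a)
  rw [map_intCast, map_pow, map_intCast] at euler
  obtain ⟨k, rfl⟩ := hp
  rw [euler, ← hr, ← pow_mul, ← pow_succ]
  congr 1
  omega

section SqrtFive

variable {R : Type*} [CommRing R] (p : ℕ) [Fact p.Prime] [CharP R p] {r : R}
  (hr : r ^ 2 = 5) (h2 : IsUnit (2 : R)) (hru : IsUnit r)
include hr h2 hru

omit [Fact p.Prime] in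
theorem dvd_fib_of_one_add_pow_eq_one_sub_pow {n : ℕ} (h : (1 + r) ^ n = (1 - r) ^ n) :
    p ∣ Nat.fib n := by
  rw [← CharP.cast_eq_zero_iff R p, ← ((h2.pow n).mul hru).mul_right_eq_zero,
    two_pow_mul_mul_fib_eq hr, h, sub_self]

theorem dvd_fib_pred_of_pow_char_eq_self (hrp : r ^ p = r) : p ∣ Nat.fib (p - 1) := by
  have h4 : IsUnit ((1 + r) * (1 - r)) := by
    rw [show (1 + r) * (1 - r) = -(2 * 2) by linear_combination -hr]
    exact (h2.mul h2).neg
  have hp : p - 1 + 1 = p := Nat.sub_add_cancel (Fact.out : p.Prime).one_le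
  refine dvd_fib_of_one_add_pow_eq_one_sub_pow p hr h2 hru (h4.mul_right_cancel ?_)
  calc (1 + r) ^ (p - 1) * ((1 + r) * (1 - r)) = (1 + r) ^ p * (1 - r) := by
        rw [← mul_assoc, ← pow_succ, hp]
    _ = (1 - r) ^ p * (1 + r) := by
        rw [add_pow_char, sub_pow_char, one_pow, hrp, mul_comm]
    _ = (1 - r) ^ (p - 1) * ((1 + r) * (1 - r)) := by
        rw [mul_comm (1 + r), ← mul_assoc, ← pow_succ, hp]

theorem dvd_fib_succ_of_pow_char_eq_neg (hrp : r ^ p = -r) : p ∣ Nat.fib (p + 1) := by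
  refine dvd_fib_of_one_add_pow_eq_one_sub_pow p hr h2 hru ?_
  rw [pow_succ, pow_succ, add_pow_char, sub_pow_char, one_pow, hrp]
  ring

end SqrtFive

/-- For every odd prime `p`, `p ∣ F (p - (5/p))`, where `(5/p)` is the Legendre symbol
of `5` modulo `p`. -/
theorem odd_prime_dvd_fib_sub_legendre
    (p : ℕ) [Fact p.Prime] (hodd : Odd p) :
    p ∣ Nat.fib ((p : ℤ) - legendreSym p 5).toNat := by
  have hp : p.Prime := Fact.out
  by_cases hp5 : p ∣ 5
  · obtain rfl : p = 5 := (Nat.prime_dvd_prime_iff_eq hp Nat.prime_five).1 hp5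
    rw [(legendreSym.eq_zero_iff 5 5).2 rfl]
    decide
  have hp2 : ¬p ∣ 2 := fun h ↦ by
    rw [(Nat.prime_dvd_prime_iff_eq hp Nat.prime_two).1 h] at hodd
    exact Nat.not_odd_iff_even.2 even_two hodd
  obtain ⟨r, hr⟩ := IsAlgClosed.exists_pow_nat_eq (5 : AlgebraicClosure (ZMod p)) two_pos
  have h2 : IsUnit (2 : AlgebraicClosure (ZMod p)) := (CharP.isUnit_ofNat_iff hp).2 hp2
  have hru : IsUnit r := (isUnit_pow_iff two_ne_zero).1 (hr ▸ (CharP.isUnit_ofNat_iff hp).2 hp5)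
  have hrp := pow_char_eq_legendreSym_mul_s9 hodd (a := 5) (by rw [hr]; norm_cast)
  have h5 : ((5 : ℤ) : ZMod p) ≠ 0 := by
    rwa [Ne, ZMod.intCast_zmod_eq_zero_iff_dvd, Int.natCast_dvd_ofNat]
  rcases legendreSym.eq_one_or_neg_one p h5 with h | h
  · rw [h, Int.cast_one, one_mul] at hrp
    rw [h, show ((p : ℤ) - 1).toNat = p - 1 by omega]
    exact dvd_fib_pred_of_pow_char_eq_self p hr h2 hru hrp
  · rw [h, Int.cast_neg, Int.cast_one, neg_one_mul] at hrp
    rw [h, show ((p : ℤ) - -1).toNat = p + 1 by omega]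
    exact dvd_fib_succ_of_pow_char_eq_neg p hr h2 hru hrp
end

section
/- Let L be a positive integer and let p be an odd prime dividing the Fibonacci number F_L with p ≡ -1 (mod L). Then p ≢ ±1 (mod 5); that is, p ≡ 2 (mod 5) or p ≡ -2 (mod 5) (and p ≠ 5). -/
/-!
If `p ≡ ±1 (mod 5)`, quadratic reciprocity makes `5` a square mod `p`, so `x ^ 2 = x + 1` has a
root `α` in `𝔽_p`; Binet's formula `F_n (2α - 1) = α ^ n - (1 - α) ^ n` together with Fermat's
little theorem gives `p ∣ F_{p-1}`. But `L ∣ p + 1` gives `p ∣ F_{p+1}`, and `F_{p-1}`, `F_{p+1}`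
are coprime. The case `p = 5` is excluded by `F_6 = 8`.
-/

open Nat

theorem pow_succ_eq_fib_mul_add_fib {R : Type*} [CommSemiring R] {α : R} (hα : α ^ 2 = α + 1)
    (n : ℕ) : α ^ (n + 1) = fib (n + 1) * α + fib n := by
  induction n with
  | zero => simp
  | succ n ih =>
    rw [pow_succ, ih, fib_add_two]
    push_cast
    rw [add_mul, mul_assoc, ← sq, hα]
    ring

theorem fib_mul_two_mul_sub_one_eq_pow_sub_pow {R : Type*} [CommRing R] {α : R}
    (hα : α ^ 2 = α + 1) (n : ℕ) : fib n * (2 * α - 1) = α ^ n - (1 - α) ^ n := by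
  have hβ : (1 - α) ^ 2 = (1 - α) + 1 := by linear_combination hα
  cases n with
  | zero => simp
  | succ n =>
    rw [pow_succ_eq_fib_mul_add_fib hα, pow_succ_eq_fib_mul_add_fib hβ]
    ring

theorem FiniteField.fib_card_sub_one_eq_zero {K : Type*} [Field K] [Fintype K] {α : K}
    (hα : α ^ 2 = α + 1) (h5 : (5 : K) ≠ 0) : (fib (Fintype.card K - 1) : K) = 0 := by
  have hβ : (1 - α) ^ 2 = (1 - α) + 1 := by linear_combination hα
  have hα0 : α ≠ 0 := by rintro rfl; norm_num at hα
  have hβ0 : 1 - α ≠ 0 := fun h => by rw [h] at hβ; norm_num at hβ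
  -- `2α - 1` is a square root of `5`
  have hsqrt5 : 2 * α - 1 ≠ 0 := fun h =>
    h5 (by linear_combination (2 * α - 1) * h - 4 * hα)
  have := fib_mul_two_mul_sub_one_eq_pow_sub_pow hα (Fintype.card K - 1)
  rw [pow_card_sub_one_eq_one α hα0, pow_card_sub_one_eq_one _ hβ0, sub_self] at this
  exact (mul_eq_zero.mp this).resolve_right hsqrt5

theorem Nat.Prime.isSquare_five_of_mod_five {p : ℕ} (hp : p.Prime) (h : p % 5 = 1 ∨ p % 5 = 4) :
    IsSquare (5 : ZMod p) := by
  have := Fact.mk hp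
  have := Fact.mk prime_five
  have hp2 : p ≠ 2 := by rintro rfl; omega
  have h5 := (ZMod.exists_sq_eq_prime_iff_of_mod_four_eq_one (p := 5) (q := p) rfl hp2).mp
  rw [← ZMod.natCast_mod] at h5
  exact_mod_cast h5 (by rcases h with h | h <;> rw [h]; exacts [⟨1, rfl⟩, ⟨2, rfl⟩])

theorem Nat.Prime.dvd_fib_sub_one {p : ℕ} (hp : p.Prime) (h : p % 5 = 1 ∨ p % 5 = 4) :
    p ∣ fib (p - 1) := by
  have := Fact.mk hp
  obtain ⟨b, hb⟩ := hp.isSquare_five_of_mod_five h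
  have cast_ne_zero {q : ℕ} (hq : q.Prime) (hpq : p ≠ q) : (q : ZMod p) ≠ 0 := fun h =>
    hpq ((Nat.prime_dvd_prime_iff_eq hp hq).mp ((ZMod.natCast_eq_zero_iff _ _).mp h))
  have h2 : (2 : ZMod p) ≠ 0 := by exact_mod_cast cast_ne_zero prime_two (by omega)
  have h5 : (5 : ZMod p) ≠ 0 := by exact_mod_cast cast_ne_zero prime_five (by omega)
  have hα : ((1 + b) / 2) ^ 2 = (1 + b) / 2 + 1 := by
    field_simp
    linear_combination -hb
  have := FiniteField.fib_card_sub_one_eq_zero hα h5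
  rwa [ZMod.card, ZMod.natCast_eq_zero_iff] at this

theorem Nat.fib_sub_one_coprime_fib_add_one (n : ℕ) : Coprime (fib (n - 1)) (fib (n + 1)) := by
  cases n with
  | zero => simp
  | succ n =>
    rw [add_tsub_cancel_right, fib_add_two, add_comm, coprime_add_self_right]
    exact fib_coprime_fib_succ n

theorem Nat.Prime.mod_five_eq_two_or_three_of_dvd_fib_add_one {p : ℕ} (hp : p.Prime)
    (hfib : p ∣ fib (p + 1)) : p % 5 = 2 ∨ p % 5 = 3 := by
  have hp5 : p ≠ 5 := by rintro rfl; norm_num at hfib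
  have hp0 : p % 5 ≠ 0 := fun h =>
    hp5 ((Nat.prime_dvd_prime_iff_eq prime_five hp).mp (Nat.dvd_of_mod_eq_zero h)).symm
  have hp14 : ¬(p % 5 = 1 ∨ p % 5 = 4) := fun h =>
    hp.one_lt.ne' (Nat.eq_one_of_dvd_coprimes (fib_sub_one_coprime_fib_add_one p)
      (hp.dvd_fib_sub_one h) hfib)
  omega

theorem odd_prime_factor_neg_one_mod_L_is_pm_two_mod_five_general
    (p : ℕ) (hp : p.Prime)
    (L : ℕ) (hdvd : p ∣ Nat.fib L)
    (hcong : (p : ℤ) ≡ -1 [ZMOD (L : ℤ)]) :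
    ¬ ((p : ℤ) ≡ 1 [ZMOD 5] ∨ (p : ℤ) ≡ -1 [ZMOD 5]) ∧
      ((p : ℤ) ≡ 2 [ZMOD 5] ∨ (p : ℤ) ≡ -2 [ZMOD 5]) ∧ p ≠ 5 := by
  have hL : L ∣ p + 1 := by
    have := hcong.symm.dvd
    rw [sub_neg_eq_add] at this
    exact_mod_cast this
  have hmod := hp.mod_five_eq_two_or_three_of_dvd_fib_add_one (hdvd.trans (fib_dvd _ _ hL))
  simp only [Int.ModEq]
  omega

/-- Let `p` be an odd prime dividing `F L` (with `L` positive) such that `p ≡ -1 (mod L)`.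
Then `p ≢ ±1 (mod 5)`; that is, `p ≡ ±2 (mod 5)` (and `p ≠ 5`). -/
theorem odd_prime_factor_neg_one_mod_L_is_pm_two_mod_five
    (p : ℕ) (hp : p.Prime) (hodd : Odd p)
    (L : ℕ) (hL : 0 < L) (hdvd : p ∣ Nat.fib L)
    (hcong : (p : ℤ) ≡ -1 [ZMOD (L : ℤ)]) :
    ¬ ((p : ℤ) ≡ 1 [ZMOD 5] ∨ (p : ℤ) ≡ -1 [ZMOD 5]) ∧
      ((p : ℤ) ≡ 2 [ZMOD 5] ∨ (p : ℤ) ≡ -2 [ZMOD 5]) ∧ p ≠ 5 :=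
  odd_prime_factor_neg_one_mod_L_is_pm_two_mod_five_general p hp L hdvd hcong
end
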